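/- arXiv:1905.07052 — 3 statements merged into one kernel-verified Lean document; each statement's English description precedes it below -/
import Mathlib

section
/- Let g : ℝ → ℝ be continuous with 0 < g(τ) ≤ 1 for all τ ∈ ℝ, g(τ) = 1 for all τ ≥ 0, and g integrable on (−∞, 0]. Define the Kirchhoff transformation ψ : ℝ → ℝ by ψ(p) = ∫₀^p g(τ) dτ and set u_l = −∫_{(−∞,0]} g(τ) dτ. Then the range of ψ equals the open interval (u_l, ∞). -/
open MeasureTheory Set Filter

theorem kirchhoff_range (g : ℝ → ℝ) (hg_cont : Continuous g)
    (hg_pos : ∀ τ : ℝ, 0 < g τ) (hg_le : ∀ τ : ℝ, g τ ≤ 1)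
    (hg_one : ∀ τ : ℝ, 0 ≤ τ → g τ = 1)
    (hg_int : MeasureTheory.IntegrableOn g (Set.Iic 0))
    (ψ : ℝ → ℝ) (hψ : ∀ p : ℝ, ψ p = ∫ τ in (0:ℝ)..p, g τ)
    (u_l : ℝ) (hul : u_l = -∫ τ in Set.Iic (0:ℝ), g τ) :
    Set.range ψ = Set.Ioi u_l := by
  have hInt : ∀ a b : ℝ, IntervalIntegrable g volume a b :=
    fun a b => hg_cont.intervalIntegrable a b
  -- continuity of ψ
  have hψ_cont : Continuous ψ := by
    have := intervalIntegral.continuous_primitive hInt 0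
    simpa [funext hψ] using this
  -- ψ p = p for p ≥ 0
  have hψ_id : ∀ p : ℝ, 0 ≤ p → ψ p = p := by
    intro p hp
    rw [hψ]
    rw [intervalIntegral.integral_congr (g := fun _ => (1:ℝ))
      (fun x hx => hg_one x (by
        rcases Set.mem_uIcc.1 hx with h | h
        · exact h.1
        · linarith [h.1, h.2]))]
    simp
  -- split integral: for a ≤ 0, ψ a = u_l + ∫_{Iic a} g
  have hsplit : ∀ a : ℝ, a ≤ 0 → ψ a = u_l + ∫ τ in Set.Iic a, g τ := by
    intro a ha
    have hunion : (∫ τ in Set.Iic (0:ℝ), g τ)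
        = (∫ τ in Set.Iic a, g τ) + ∫ τ in Set.Ioc a 0, g τ := by
      rw [← setIntegral_union (Set.Iic_disjoint_Ioc le_rfl) measurableSet_Ioc
        (hg_int.mono_set (Set.Iic_subset_Iic.2 ha))
        (hg_int.mono_set (Set.Ioc_subset_Iic_self.trans (Set.Iic_subset_Iic.2 le_rfl))),
        Set.Iic_union_Ioc_eq_Iic ha]
    have : ψ a = -∫ τ in Set.Ioc a 0, g τ := by
      rw [hψ, intervalIntegral.integral_symm a 0,
        intervalIntegral.integral_of_le ha]
    rw [this, hul]
    linarith [hunion]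
  -- positivity of ∫_{Iic a} g for every a
  have hIicpos : ∀ a : ℝ, 0 < ∫ τ in Set.Iic a, g τ := by
    intro a
    have hint : IntegrableOn g (Set.Iic a) := by
      rcases le_or_gt a 0 with h | h
      · exact hg_int.mono_set (Set.Iic_subset_Iic.2 h)
      · have : Set.Iic a = Set.Iic 0 ∪ Set.Ioc 0 a := (Set.Iic_union_Ioc_eq_Iic h.le).symm
        rw [this]
        exact hg_int.union (hInt 0 a).1
    rw [setIntegral_pos_iff_support_of_nonneg_ae
      (Filter.Eventually.of_forall fun x => (hg_pos x).le) hint]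
    have : Function.support g = Set.univ := by
      ext x; simp [Function.mem_support, (hg_pos x).ne']
    rw [this, Set.univ_inter]
    simp [Real.volume_Iic]
  have hul_neg : u_l < 0 := by
    rw [hul]; linarith [hIicpos 0]
  -- ψ p > u_l always
  have hgt : ∀ p : ℝ, u_l < ψ p := by
    intro p
    rcases le_or_gt p 0 with h | h
    · rw [hsplit p h]; linarith [hIicpos p]
    · rw [hψ_id p h.le]; linarith
  -- tendsto: ∫_{Iic (-n)} g → 0
  have htend : Tendsto (fun n : ℕ => ∫ τ in Set.Iic (-(n:ℝ)), g τ) atTop (nhds 0) := by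
    have h := tendsto_setIntegral_of_antitone (μ := volume) (f := g)
      (s := fun n : ℕ => Set.Iic (-(n:ℝ)))
      (fun n => measurableSet_Iic)
      (fun m n hmn => Set.Iic_subset_Iic.2 (by exact_mod_cast neg_le_neg (Nat.cast_le.2 hmn)))
      ⟨0, by simpa using hg_int⟩
    have hempty : (⋂ n : ℕ, Set.Iic (-(n:ℝ))) = ∅ := by
      ext x
      simp only [Set.mem_iInter, Set.mem_Iic, Set.mem_empty_iff_false, iff_false, not_forall]
      obtain ⟨n, hn⟩ := exists_nat_gt (-x)
      exact ⟨n, by push_neg; linarith⟩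
    rwa [hempty, MeasureTheory.setIntegral_empty] at h
  ext u
  simp only [Set.mem_range, Set.mem_Ioi]
  constructor
  · rintro ⟨p, rfl⟩; exact hgt p
  · intro hu
    -- find a with ψ a < u
    have : ∀ᶠ n : ℕ in atTop, (∫ τ in Set.Iic (-(n:ℝ)), g τ) < u - u_l :=
      htend.eventually_lt_const (by linarith)
    obtain ⟨n, hn⟩ := this.exists
    set a : ℝ := -(n:ℝ) with ha
    have ha0 : a ≤ 0 := neg_nonpos.2 (Nat.cast_nonneg n)
    have hψa : ψ a < u := by rw [hsplit a ha0]; linarith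
    set b : ℝ := max 0 u with hb
    have hψb : u ≤ ψ b := by
      rw [hψ_id b (le_max_left _ _)]; exact le_max_right _ _
    have hab : a ≤ b := ha0.trans (le_max_left _ _)
    have := intermediate_value_Icc hab hψ_cont.continuousOn
    have hu_mem : u ∈ Set.Icc (ψ a) (ψ b) := ⟨hψa.le, hψb⟩
    obtain ⟨p, _, hp⟩ := this hu_mem
    exact ⟨p, hp⟩
end

section
/- Let g : ℝ → ℝ be continuous with g(τ) > 0 for all τ, define the Kirchhoff transformation ψ : ℝ → ℝ by ψ(p) = ∫₀^p g(τ) dτ, and let h : ℝ → ℝ be a left inverse of ψ, i.e. h(ψ(p)) = p for all p ∈ ℝ. Let S : ℝ → ℝ be differentiable at a point p₀ with derivative S'(p₀). Then the transformed saturation b = S ∘ h is differentiable at u₀ = ψ(p₀) with derivative b'(u₀) = S'(p₀) / g(p₀). -/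
theorem transformed_saturation_hasDerivAt (g : ℝ → ℝ) (hg_cont : Continuous g)
    (hg_pos : ∀ τ : ℝ, 0 < g τ)
    (ψ : ℝ → ℝ) (hψ : ∀ p : ℝ, ψ p = ∫ τ in (0:ℝ)..p, g τ)
    (h : ℝ → ℝ) (hinv : ∀ p : ℝ, h (ψ p) = p)
    (S : ℝ → ℝ) (p₀ S' : ℝ) (hS : HasDerivAt S S' p₀) :
    HasDerivAt (S ∘ h) (S' / g p₀) (ψ p₀) := by
  have hψ' : HasStrictDerivAt ψ (g p₀) p₀ := by
    have := hg_cont.integral_hasStrictDerivAt 0 p₀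
    exact this.congr_deriv rfl |>.congr_of_eventuallyEq
      (Filter.Eventually.of_forall fun x => (hψ x).symm)
  have hne : g p₀ ≠ 0 := (hg_pos p₀).ne'
  have hh : HasStrictDerivAt h (g p₀)⁻¹ (ψ p₀) :=
    hψ'.to_local_left_inverse hne (Filter.Eventually.of_forall hinv)
  rw [← hinv p₀] at hS
  have := hS.comp (ψ p₀) hh.hasDerivAt
  simpa [div_eq_mul_inv] using this
end

section
/- Let n ≥ 1 and let u : ℝⁿ → ℝ be three times continuously differentiable with compact support. Then the squared L² norm of the full Hessian equals the squared L² norm of the Laplacian: ∑_{i=1}^n ∑_{j=1}^n ∫_{ℝⁿ} (∂ᵢ∂ⱼ u)² dx = ∫_{ℝⁿ} (∑_{i=1}^n ∂ᵢ∂ᵢ u)² dx. -/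
/-- Partial derivative of `f : ℝⁿ → ℝ` in the `i`-th coordinate direction. -/
noncomputable def pderiv' (n : ℕ) (i : Fin n) (f : EuclideanSpace ℝ (Fin n) → ℝ)
    (x : EuclideanSpace ℝ (Fin n)) : ℝ :=
  fderiv ℝ f x (EuclideanSpace.single i 1)

/-!
Two integrations by parts, together with the symmetry of second derivatives, give
`∫ (∂ᵢ∂ⱼu)² = -∫ ∂ⱼ∂ᵢ∂ᵢu · ∂ⱼu = ∫ ∂ᵢ∂ᵢu · ∂ⱼ∂ⱼu`; the boundary terms vanish because of the compact
support. Summing over `i` and `j` turns the right-hand side into `∫ (Δu)²`.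
-/

open MeasureTheory

section PartialDerivative

variable {n : ℕ} {f g : EuclideanSpace ℝ (Fin n) → ℝ}

theorem ContDiff.pderiv' {m : WithTop ℕ∞} (hf : ContDiff ℝ (m + 1) f) (i : Fin n) :
    ContDiff ℝ m (pderiv' n i f) := by
  exact (ContinuousLinearMap.apply ℝ ℝ (EuclideanSpace.single i 1)).contDiff.comp
    (hf.fderiv_right le_rfl)

theorem HasCompactSupport.pderiv' (hf : HasCompactSupport f) (i : Fin n) :
    HasCompactSupport (pderiv' n i f) := by
  exact (hf.fderiv (𝕜 := ℝ)).comp_left (g := fun L => L (EuclideanSpace.single i 1)) rfl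

theorem pderiv'_pderiv'_eq_fderiv_fderiv (hf : ContDiff ℝ 2 f) (i j : Fin n)
    (x : EuclideanSpace ℝ (Fin n)) :
    pderiv' n i (pderiv' n j f) x =
      fderiv ℝ (fderiv ℝ f) x (EuclideanSpace.single i 1) (EuclideanSpace.single j 1) := by
  have hdiff : DifferentiableAt ℝ (fderiv ℝ f) x :=
    (hf.fderiv_right (m := 1) le_rfl).differentiable one_ne_zero x
  change fderiv ℝ (fun y => fderiv ℝ f y (EuclideanSpace.single j 1)) x _ = _
  rw [fderiv_clm_apply hdiff (differentiableAt_const _)]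
  simp

theorem pderiv'_comm (hf : ContDiff ℝ 2 f) (i j : Fin n) :
    pderiv' n i (pderiv' n j f) = pderiv' n j (pderiv' n i f) := by
  funext x
  rw [pderiv'_pderiv'_eq_fderiv_fderiv hf, pderiv'_pderiv'_eq_fderiv_fderiv hf]
  exact hf.contDiffAt.isSymmSndFDerivAt (by norm_num) _ _

theorem integral_mul_pderiv'_eq_neg_integral_pderiv'_mul (hf : ContDiff ℝ 1 f)
    (hg : ContDiff ℝ 1 g) (hfs : HasCompactSupport f) (i : Fin n) :
    ∫ x, f x * pderiv' n i g x = -∫ x, pderiv' n i f x * g x := by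
  have hf' : Continuous (pderiv' n i f) := (hf.pderiv' (m := 0) i).continuous
  have hg' : Continuous (pderiv' n i g) := (hg.pderiv' (m := 0) i).continuous
  exact integral_mul_fderiv_eq_neg_fderiv_mul_of_integrable
    ((hf'.mul hg.continuous).integrable_of_hasCompactSupport (hfs.pderiv' i).mul_right)
    ((hf.continuous.mul hg').integrable_of_hasCompactSupport hfs.mul_right)
    ((hf.continuous.mul hg.continuous).integrable_of_hasCompactSupport hfs.mul_right)
    (fun x _ => hf.differentiable one_ne_zero x) (fun x _ => hg.differentiable one_ne_zero x)

theorem integral_pderiv'_pderiv'_sq (hf : ContDiff ℝ 3 f) (hfs : HasCompactSupport f)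
    (i j : Fin n) :
    ∫ x, pderiv' n i (pderiv' n j f) x ^ 2 =
      ∫ x, pderiv' n i (pderiv' n i f) x * pderiv' n j (pderiv' n j f) x := by
  have hf₁ (k : Fin n) : ContDiff ℝ 2 (pderiv' n k f) := hf.pderiv' k
  have hf₂ (k l : Fin n) : ContDiff ℝ 1 (pderiv' n k (pderiv' n l f)) := (hf₁ l).pderiv' k
  calc ∫ x, pderiv' n i (pderiv' n j f) x ^ 2
      = ∫ x, pderiv' n j (pderiv' n i f) x * pderiv' n i (pderiv' n j f) x := by
        simp only [pow_two, pderiv'_comm (hf.of_le (by norm_num)) i j]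
    _ = -∫ x, pderiv' n i (pderiv' n j (pderiv' n i f)) x * pderiv' n j f x :=
        integral_mul_pderiv'_eq_neg_integral_pderiv'_mul (hf₂ j i) ((hf₁ j).of_le (by norm_num))
          ((hfs.pderiv' i).pderiv' j) i
    _ = -∫ x, pderiv' n j (pderiv' n i (pderiv' n i f)) x * pderiv' n j f x := by
        rw [pderiv'_comm (hf₁ i) i j]
    _ = ∫ x, pderiv' n i (pderiv' n i f) x * pderiv' n j (pderiv' n j f) x :=
        (integral_mul_pderiv'_eq_neg_integral_pderiv'_mul (hf₂ i i)
          ((hf₁ j).of_le (by norm_num)) ((hfs.pderiv' i).pderiv' i) j).symm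

end PartialDerivative

theorem sum_sum_integral_mul_eq_integral_sq {α ι : Type*} [MeasurableSpace α] {μ : Measure α}
    (s : Finset ι) (f : ι → α → ℝ) (hf : ∀ i ∈ s, ∀ j ∈ s, Integrable (fun x => f i x * f j x) μ) :
    ∑ i ∈ s, ∑ j ∈ s, ∫ x, f i x * f j x ∂μ = ∫ x, (∑ i ∈ s, f i x) ^ 2 ∂μ := by
  simp_rw [pow_two, Finset.sum_mul_sum]
  rw [integral_finsetSum _ fun i hi => integrable_finsetSum _ fun j hj => hf i hi j hj]
  exact Finset.sum_congr rfl fun i hi => (integral_finsetSum _ fun j hj => hf i hi j hj).symm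

theorem hessian_L2_eq_laplacian_L2_general (n : ℕ)
    (u : EuclideanSpace ℝ (Fin n) → ℝ) (hu : ContDiff ℝ 3 u)
    (hsupp : HasCompactSupport u) :
    ∑ i : Fin n, ∑ j : Fin n,
        ∫ x : EuclideanSpace ℝ (Fin n), (pderiv' n i (pderiv' n j u) x) ^ 2 =
      ∫ x : EuclideanSpace ℝ (Fin n), (∑ i : Fin n, pderiv' n i (pderiv' n i u) x) ^ 2 := by
  have hcont (i : Fin n) : Continuous (pderiv' n i (pderiv' n i u)) :=
    ((hu.pderiv' (m := 2) i).pderiv' (m := 1) i).continuous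
  simp_rw [integral_pderiv'_pderiv'_sq hu hsupp]
  exact sum_sum_integral_mul_eq_integral_sq _ _ fun i _ j _ =>
    ((hcont i).mul (hcont j)).integrable_of_hasCompactSupport
      ((hsupp.pderiv' i).pderiv' i).mul_right

theorem hessian_L2_eq_laplacian_L2 (n : ℕ) (hn : 1 ≤ n)
    (u : EuclideanSpace ℝ (Fin n) → ℝ) (hu : ContDiff ℝ 3 u)
    (hsupp : HasCompactSupport u) :
    ∑ i : Fin n, ∑ j : Fin n,
        ∫ x : EuclideanSpace ℝ (Fin n), (pderiv' n i (pderiv' n j u) x) ^ 2 =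
      ∫ x : EuclideanSpace ℝ (Fin n), (∑ i : Fin n, pderiv' n i (pderiv' n i u) x) ^ 2 :=
  hessian_L2_eq_laplacian_L2_general n u hu hsupp
end
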